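/- Let γ > 0 and define h_γ(t) := (e^{−te}/Γ(γ)) · ∫_0^∞ t^{b−1} b^{γ−1} / Γ(b) db for t > 0, where Γ is the Gamma function. Then for every s ≥ 0, ∫_0^∞ e^{−st} h_γ(t) dt = ( ln(e+s) )^{−γ}. -/

import Mathlib

open MeasureTheory

/-- The kernel `h_γ(t) := (e^{-te}/Γ(γ)) ∫_0^∞ t^{b-1} b^{γ-1} / Γ(b) db`. -/
noncomputable def hKer (γ : ℝ) (t : ℝ) : ℝ :=
  (Real.exp (-(t * Real.exp 1)) / Real.Gamma γ) *
    ∫ b in Set.Ioi (0:ℝ), t ^ (b - 1) * b ^ (γ - 1) / Real.Gamma b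

lemma integrableOn_aux17 {ν r : ℝ} (hν : -1 < ν) (hr : 0 < r) :
    MeasureTheory.IntegrableOn (fun x : ℝ => x ^ ν * Real.exp (-(r * x)))
      (Set.Ioi 0) := by
  have h := integrableOn_rpow_mul_exp_neg_mul_rpow (p := 1) hν one_pos hr
  refine h.congr_fun (fun x hx => ?_) measurableSet_Ioi
  simp only [Real.rpow_one, neg_mul]

lemma integral_aux17 {a r : ℝ} (ha : 0 < a) (hr : 0 < r) :
    ∫ t : ℝ in Set.Ioi 0, t ^ (a - 1) * Real.exp (-(r * t))
      = (1 / r) ^ a * Real.Gamma a :=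
  Real.integral_rpow_mul_exp_neg_mul_Ioi ha hr

/-- For `γ > 0`, the Laplace transform of `h_γ` is
`s ↦ (ln(e+s))^{-γ}` for all `s ≥ 0`. -/
theorem stmt_17 (γ : ℝ) (hγ : 0 < γ) (s : ℝ) (hs : 0 ≤ s) :
    ∫ t in Set.Ioi (0:ℝ), Real.exp (-(s * t)) * hKer γ t
      = (Real.log (Real.exp 1 + s)) ^ (-γ) := by
  set c : ℝ := Real.exp 1 + s with hc
  have hc1 : 1 < c := by
    have := Real.add_one_lt_exp (one_ne_zero)
    nlinarith [Real.exp_pos 1]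
  have hc0 : 0 < c := lt_trans one_pos hc1
  have hlc : 0 < Real.log c := Real.log_pos hc1
  have hΓγ : 0 < Real.Gamma γ := Real.Gamma_pos_of_pos hγ
  set F : ℝ → ℝ → ℝ := fun t b =>
    Real.exp (-(c * t)) * t ^ (b - 1) * (b ^ (γ - 1) / (Real.Gamma b * Real.Gamma γ))
    with hF
  -- step 1: rewrite integrand as inner integral of F
  have step1 : ∀ t ∈ Set.Ioi (0:ℝ),
      Real.exp (-(s * t)) * hKer γ t = ∫ b in Set.Ioi (0:ℝ), F t b := by
    intro t ht
    rw [hKer]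
    rw [show (Real.exp (-(s * t)) * ((Real.exp (-(t * Real.exp 1)) / Real.Gamma γ) *
        ∫ b in Set.Ioi (0:ℝ), t ^ (b - 1) * b ^ (γ - 1) / Real.Gamma b))
      = (Real.exp (-(s * t)) * Real.exp (-(t * Real.exp 1)) / Real.Gamma γ) *
        ∫ b in Set.Ioi (0:ℝ), t ^ (b - 1) * b ^ (γ - 1) / Real.Gamma b by ring]
    rw [← Real.exp_add, ← integral_const_mul]
    refine setIntegral_congr_fun measurableSet_Ioi (fun b hb => ?_)
    rw [hF]
    have h2 : -(s * t) + -(t * Real.exp 1) = -(c * t) := by rw [hc]; ring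
    rw [h2]
    field_simp
  rw [setIntegral_congr_fun measurableSet_Ioi step1]
  -- measurability of uncurried F on the product
  have hmeas : AEStronglyMeasurable (Function.uncurry F)
      ((volume.restrict (Set.Ioi (0:ℝ))).prod (volume.restrict (Set.Ioi (0:ℝ)))) := by
    rw [Measure.prod_restrict]
    refine ContinuousOn.aestronglyMeasurable ?_ (measurableSet_Ioi.prod measurableSet_Ioi)
    have hΓcont : ∀ x : ℝ, 0 < x → ContinuousAt Real.Gamma x := by
      intro x hx
      refine (Real.differentiableAt_Gamma (fun m => ?_)).continuousAt
      intro h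
      have : (0:ℝ) ≤ (m:ℝ) := Nat.cast_nonneg m
      rw [h] at hx; linarith
    intro p hp
    obtain ⟨hp1, hp2⟩ := Set.mem_prod.mp hp
    have hp1' : (0:ℝ) < p.1 := hp1
    have hp2' : (0:ℝ) < p.2 := hp2
    have c1 : ContinuousAt (fun p : ℝ × ℝ => Real.exp (-(c * p.1))) p := by fun_prop
    have c2 : ContinuousAt (fun p : ℝ × ℝ => p.1 ^ (p.2 - 1)) p := by
      have h := Real.continuousAt_rpow (p.1, p.2 - 1) (Or.inl (ne_of_gt hp1'))
      exact h.comp (f := fun p : ℝ × ℝ => (p.1, p.2 - 1)) (by fun_prop)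
    have c3 : ContinuousAt (fun p : ℝ × ℝ => p.2 ^ (γ - 1)) p := by
      have h := Real.continuousAt_rpow (p.2, γ - 1) (Or.inl (ne_of_gt hp2'))
      exact h.comp (f := fun p : ℝ × ℝ => (p.2, γ - 1)) (by fun_prop)
    have c4 : ContinuousAt (fun p : ℝ × ℝ => Real.Gamma p.2 * Real.Gamma γ) p :=
      ((hΓcont _ hp2').comp continuousAt_snd).mul continuousAt_const
    have hne : Real.Gamma p.2 * Real.Gamma γ ≠ 0 := by
      have := Real.Gamma_pos_of_pos hp2'
      positivity
    exact (((c1.mul c2).mul (c3.div c4 hne))).continuousWithinAt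
  -- inner integral computation
  have hsect : ∀ b ∈ Set.Ioi (0:ℝ),
      ∫ t in Set.Ioi (0:ℝ), F t b
        = b ^ (γ - 1) * Real.exp (-(Real.log c * b)) / Real.Gamma γ := by
    intro b hb
    have hb' : (0:ℝ) < b := hb
    have hΓb : 0 < Real.Gamma b := Real.Gamma_pos_of_pos hb'
    have h3 : ∫ t in Set.Ioi (0:ℝ), F t b
        = (b ^ (γ - 1) / (Real.Gamma b * Real.Gamma γ)) *
          ∫ t in Set.Ioi (0:ℝ), t ^ (b - 1) * Real.exp (-(c * t)) := by
      rw [← integral_const_mul]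
      refine setIntegral_congr_fun measurableSet_Ioi (fun t ht => ?_)
      rw [hF]; ring
    rw [h3, integral_aux17 hb' hc0]
    have h1 : (1 / c) ^ b = Real.exp (-(Real.log c * b)) := by
      rw [one_div, Real.inv_rpow hc0.le, Real.rpow_def_of_pos hc0, ← Real.exp_neg]
    rw [h1]
    field_simp
  -- integrability of uncurried F
  have hint : Integrable (Function.uncurry F)
      ((volume.restrict (Set.Ioi (0:ℝ))).prod (volume.restrict (Set.Ioi (0:ℝ)))) := by
    rw [integrable_prod_iff' hmeas]
    constructor
    · refine (ae_restrict_mem measurableSet_Ioi).mono (fun b hb => ?_)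
      have hb' : (0:ℝ) < b := hb
      have h : MeasureTheory.IntegrableOn
          (fun x : ℝ => x ^ (b - 1) * Real.exp (-(c * x)) *
            (b ^ (γ - 1) / (Real.Gamma b * Real.Gamma γ))) (Set.Ioi 0) :=
        (integrableOn_aux17 (by linarith : (-1:ℝ) < b - 1) hc0).mul_const
          (b ^ (γ - 1) / (Real.Gamma b * Real.Gamma γ))
      refine h.congr_fun (fun t ht => ?_) measurableSet_Ioi
      simp only [Function.uncurry, hF]; ring
    · have key : ∀ b ∈ Set.Ioi (0:ℝ),
          (b ^ (γ - 1) * Real.exp (-(Real.log c * b)) / Real.Gamma γ)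
            = ∫ t in Set.Ioi (0:ℝ), ‖Function.uncurry F (t, b)‖ := by
        intro b hb
        have hb' : (0:ℝ) < b := hb
        have hΓb : 0 < Real.Gamma b := Real.Gamma_pos_of_pos hb'
        rw [← hsect b hb]
        refine (setIntegral_congr_fun measurableSet_Ioi (fun t ht => ?_)).symm
        have ht' : (0:ℝ) < t := ht
        rw [Function.uncurry, Real.norm_eq_abs, abs_of_nonneg]
        rw [hF]
        positivity
      have hInt : IntegrableOn
          (fun b : ℝ => b ^ (γ - 1) * Real.exp (-(Real.log c * b)) / Real.Gamma γ)
          (Set.Ioi 0) :=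
        (integrableOn_aux17 (by linarith : (-1:ℝ) < γ - 1) hlc).div_const _
      exact hInt.congr_fun key measurableSet_Ioi
  rw [integral_integral_swap hint, setIntegral_congr_fun measurableSet_Ioi hsect]
  rw [integral_div, integral_aux17 hγ hlc, mul_div_assoc, div_self hΓγ.ne', mul_one,
    one_div, Real.inv_rpow hlc.le, ← Real.rpow_neg hlc.le]
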